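/- arXiv:1904.10063 — 7 statements merged into one kernel-verified Lean document; each statement's English description precedes it below -/
import Mathlib

section
/- Let ψ(λ) = μλ + (σ²/2)λ² − aλ/(λ+c) with μ, a, c, σ² > 0, and let u > 0. Suppose −ξ₂ < −c < −ξ₁ < 0 < Φ(u) are the three real roots of ψ(λ) = u. Then the function W^{(u)}(x) = e^{−ξ₂x}/ψ'(−ξ₂) + e^{−ξ₁x}/ψ'(−ξ₁) + e^{Φ(u)x}/ψ'(Φ(u)) satisfies ∫₀^∞ e^{−λx} W^{(u)}(x) dx = 1/(ψ(λ) − u) for all λ > Φ(u). -/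
open Set MeasureTheory Real

lemma integral_exp_neg_mul_Ioi_zero' {b : ℝ} (hb : 0 < b) :
    ∫ x in Ioi (0:ℝ), Real.exp (-b * x) = 1 / b := by
  have h := integral_comp_mul_left_Ioi (fun y => Real.exp (-y)) 0 hb
  simp only [mul_zero] at h
  rw [integral_exp_neg_Ioi_zero] at h
  simp only [neg_mul]
  rw [h, smul_eq_mul, mul_one, one_div]

lemma deriv_at_root (k c u p q s r : ℝ) (hr : r + c ≠ 0)
    (ψ : ℝ → ℝ)
    (hev : ψ =ᶠ[nhds r] fun x => k*((x-p)*(x+q)*(x+s))/(x+c) + u) :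
    deriv ψ r = (k*((r+q)*(r+s)+(r-p)*(r+s)+(r-p)*(r+q))*(r+c)
      - k*((r-p)*(r+q)*(r+s)))/(r+c)^2 := by
  rw [hev.deriv_eq]
  have h0 : HasDerivAt (fun x : ℝ => (x-p)*(x+q)*(x+s))
      ((r+q)*(r+s)+(r-p)*(r+s)+(r-p)*(r+q)) r := by
    have := (((hasDerivAt_id r).sub_const p).mul ((hasDerivAt_id r).add_const q)).mul
      ((hasDerivAt_id r).add_const s)
    refine this.congr_deriv ?_
    simp; ring
  have h1 := (h0.const_mul k).div ((hasDerivAt_id r).add_const c) hr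
  have h2 := h1.add_const u
  simp only [id_eq, Pi.div_apply] at h2
  rw [h2.deriv]
  ring

set_option maxHeartbeats 1000000 in
/-- The explicit scale function of the one-sided jump-diffusion process has
Laplace transform 1/(ψ(λ) − u) for λ > Φ(u). -/
theorem scale_function_laplace_transform
    (μ a c σ u : ℝ) (hμ : 0 < μ) (ha : 0 < a) (hc : 0 < c)
    (hσ : 0 < σ ^ 2) (hu : 0 < u)
    (ψ : ℝ → ℝ)
    (hψ : ∀ lam : ℝ, lam ≠ -c →
      ψ lam = μ * lam + σ ^ 2 / 2 * lam ^ 2 - a * lam / (lam + c))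
    (ξ₁ ξ₂ Φu : ℝ)
    (horder : -ξ₂ < -c ∧ -c < -ξ₁ ∧ -ξ₁ < 0 ∧ 0 < Φu)
    (hroot₂ : ψ (-ξ₂) = u) (hroot₁ : ψ (-ξ₁) = u) (hrootΦ : ψ Φu = u)
    (W : ℝ → ℝ)
    (hW : ∀ x : ℝ, 0 ≤ x →
      W x = Real.exp (-ξ₂ * x) / deriv ψ (-ξ₂)
          + Real.exp (-ξ₁ * x) / deriv ψ (-ξ₁)
          + Real.exp (Φu * x) / deriv ψ Φu) :
    ∀ lam : ℝ, Φu < lam →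
      ∫ x in Ioi (0 : ℝ), Real.exp (-lam * x) * W x = 1 / (ψ lam - u) := by
  obtain ⟨ho1, ho2, ho3, ho4⟩ := horder
  -- basic sign facts
  have hξ₁pos : 0 < ξ₁ := by linarith
  have hξ₂c : c < ξ₂ := by linarith
  have hξ₂pos : 0 < ξ₂ := by linarith
  have hξ₁c : ξ₁ < c := by linarith
  -- cleared root equations
  have E : ∀ r : ℝ, r + c ≠ 0 → ψ r = u →
      (μ * r + σ ^ 2 / 2 * r ^ 2 - u) * (r + c) - a * r = 0 := by
    intro r hr hru
    have hr' : r ≠ -c := by intro h; apply hr; rw [h]; ring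
    have h := hψ r hr'
    rw [hru] at h
    field_simp at h
    linear_combination -h / 2
  have hd2 : (-ξ₂ : ℝ) + c ≠ 0 := by intro h; linarith [h]
  have hd1 : (-ξ₁ : ℝ) + c ≠ 0 := by intro h; linarith [h]
  have hdΦ : Φu + c ≠ 0 := by intro h; linarith [h]
  have E2 := E (-ξ₂) hd2 hroot₂
  have E1 := E (-ξ₁) hd1 hroot₁
  have EΦ := E Φu hdΦ hrootΦ
  -- quadratic coefficients
  set A := μ + σ ^ 2 / 2 * c + σ ^ 2 / 2 * (Φu + (-ξ₁) + (-ξ₂)) with hAdef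
  set B := μ * c - u - a - σ ^ 2 / 2 * (Φu * (-ξ₁) + Φu * (-ξ₂) + (-ξ₁) * (-ξ₂)) with hBdef
  set C := -(u * c) + σ ^ 2 / 2 * (Φu * (-ξ₁) * (-ξ₂)) with hCdef
  have gΦ : A * Φu ^ 2 + B * Φu + C = 0 := by
    rw [hAdef, hBdef, hCdef]; linear_combination EΦ
  have g1 : A * (-ξ₁) ^ 2 + B * (-ξ₁) + C = 0 := by
    rw [hAdef, hBdef, hCdef]; linear_combination E1
  have g2 : A * (-ξ₂) ^ 2 + B * (-ξ₂) + C = 0 := by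
    rw [hAdef, hBdef, hCdef]; linear_combination E2
  have h12 : A * (Φu + -ξ₁) + B = 0 := by
    have h : (Φu - (-ξ₁)) * (A * (Φu + -ξ₁) + B) = 0 := by linear_combination gΦ - g1
    rcases mul_eq_zero.mp h with h' | h'
    · exfalso; linarith
    · exact h'
  have h23 : A * (-ξ₁ + -ξ₂) + B = 0 := by
    have h : ((-ξ₁) - (-ξ₂)) * (A * (-ξ₁ + -ξ₂) + B) = 0 := by linear_combination g1 - g2
    rcases mul_eq_zero.mp h with h' | h'
    · exfalso; linarith
    · exact h'
  have hA : A = 0 := by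
    have h : (Φu - (-ξ₂)) * A = 0 := by linear_combination h12 - h23
    rcases mul_eq_zero.mp h with h' | h'
    · exfalso; linarith
    · exact h'
  have hB : B = 0 := by linear_combination h12 - (Φu + -ξ₁) * hA
  have hC : C = 0 := by linear_combination gΦ - Φu ^ 2 * hA - Φu * hB
  -- factorization
  have hfac : ∀ lam : ℝ, lam + c ≠ 0 →
      ψ lam - u = σ ^ 2 / 2 * ((lam - Φu) * (lam + ξ₁) * (lam + ξ₂)) / (lam + c) := by
    intro lam hl
    have hl' : lam ≠ -c := by intro h; apply hl; rw [h]; ring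
    rw [hψ lam hl']
    rw [hAdef] at hA; rw [hBdef] at hB; rw [hCdef] at hC
    field_simp
    linear_combination 2 * (lam ^ 2 * hA + lam * hB + hC)
  -- eventual equality near points ≠ -c
  have hev : ∀ r : ℝ, r ≠ -c → ψ =ᶠ[nhds r]
      fun x => σ ^ 2 / 2 * ((x - Φu) * (x + ξ₁) * (x + ξ₂)) / (x + c) + u := by
    intro r hr
    filter_upwards [eventually_ne_nhds hr] with x hx
    have hxc : x + c ≠ 0 := by intro h; apply hx; linarith
    have h := hfac x hxc
    linarith [h]
  have ne2 : (-ξ₂ : ℝ) ≠ -c := by intro h; rw [h] at ho1; exact lt_irrefl _ ho1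
  have ne1 : (-ξ₁ : ℝ) ≠ -c := by intro h; rw [h] at ho2; exact lt_irrefl _ ho2
  have neΦ : Φu ≠ -c := by intro h; rw [h] at ho4; linarith
  have dΦval : deriv ψ Φu = σ ^ 2 / 2 * ((Φu + ξ₁) * (Φu + ξ₂)) / (Φu + c) := by
    rw [deriv_at_root (σ ^ 2 / 2) c u Φu ξ₁ ξ₂ Φu hdΦ ψ (hev Φu neΦ)]
    field_simp
    ring
  have d1val : deriv ψ (-ξ₁) = σ ^ 2 / 2 * ((-ξ₁ - Φu) * (-ξ₁ + ξ₂)) / (-ξ₁ + c) := by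
    rw [deriv_at_root (σ ^ 2 / 2) c u Φu ξ₁ ξ₂ (-ξ₁) hd1 ψ (hev (-ξ₁) ne1)]
    field_simp
    ring
  have d2val : deriv ψ (-ξ₂) = σ ^ 2 / 2 * ((-ξ₂ - Φu) * (-ξ₂ + ξ₁)) / (-ξ₂ + c) := by
    rw [deriv_at_root (σ ^ 2 / 2) c u Φu ξ₁ ξ₂ (-ξ₂) hd2 ψ (hev (-ξ₂) ne2)]
    field_simp
    ring
  -- now the integral
  intro lam hlam
  have hb2 : 0 < lam + ξ₂ := by linarith
  have hb1 : 0 < lam + ξ₁ := by linarith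
  have hbΦ : 0 < lam - Φu := by linarith
  have hbc : 0 < lam + c := by linarith
  have i2 : IntegrableOn (fun x : ℝ => (1 / deriv ψ (-ξ₂)) * Real.exp (-(lam + ξ₂) * x)) (Ioi 0) :=
    (exp_neg_integrableOn_Ioi 0 hb2).const_mul _
  have i1 : IntegrableOn (fun x : ℝ => (1 / deriv ψ (-ξ₁)) * Real.exp (-(lam + ξ₁) * x)) (Ioi 0) :=
    (exp_neg_integrableOn_Ioi 0 hb1).const_mul _
  have iΦ : IntegrableOn (fun x : ℝ => (1 / deriv ψ Φu) * Real.exp (-(lam - Φu) * x)) (Ioi 0) :=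
    (exp_neg_integrableOn_Ioi 0 hbΦ).const_mul _
  have hI : ∫ x in Ioi (0 : ℝ), Real.exp (-lam * x) * W x
      = (1 / deriv ψ (-ξ₂)) * (1 / (lam + ξ₂)) + (1 / deriv ψ (-ξ₁)) * (1 / (lam + ξ₁))
        + (1 / deriv ψ Φu) * (1 / (lam - Φu)) := by
    rw [setIntegral_congr_fun measurableSet_Ioi (g := fun x : ℝ =>
        (1 / deriv ψ (-ξ₂)) * Real.exp (-(lam + ξ₂) * x)
        + (1 / deriv ψ (-ξ₁)) * Real.exp (-(lam + ξ₁) * x)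
        + (1 / deriv ψ Φu) * Real.exp (-(lam - Φu) * x)) ?_]
    · have i21 : IntegrableOn (fun x : ℝ =>
          (1 / deriv ψ (-ξ₂)) * Real.exp (-(lam + ξ₂) * x)
          + (1 / deriv ψ (-ξ₁)) * Real.exp (-(lam + ξ₁) * x)) (Ioi 0) := i2.add i1
      rw [integral_add i21 iΦ, integral_add i2 i1, integral_const_mul,
        integral_const_mul, integral_const_mul,
        integral_exp_neg_mul_Ioi_zero' hb2, integral_exp_neg_mul_Ioi_zero' hb1,
        integral_exp_neg_mul_Ioi_zero' hbΦ]
    · intro x hx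
      have hx0 : (0 : ℝ) < x := hx
      dsimp only
      rw [hW x hx0.le,
        show (-(lam + ξ₂) * x) = -lam * x + -ξ₂ * x by ring,
        show (-(lam + ξ₁) * x) = -lam * x + -ξ₁ * x by ring,
        show (-(lam - Φu) * x) = -lam * x + Φu * x by ring,
        Real.exp_add, Real.exp_add, Real.exp_add]
      ring
  rw [hI, d2val, d1val, dΦval, hfac lam hbc.ne']
  have hσ' : σ ^ 2 ≠ 0 := ne_of_gt hσ
  have n1 : Φu + ξ₁ ≠ 0 := by positivity
  have n2 : Φu + ξ₂ ≠ 0 := by positivity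
  have n3 : (-ξ₁ : ℝ) - Φu ≠ 0 := by intro h; linarith [h]
  have n4 : (-ξ₁ : ℝ) + ξ₂ ≠ 0 := by intro h; linarith [h]
  have n5 : (-ξ₂ : ℝ) - Φu ≠ 0 := by intro h; linarith [h]
  have n6 : (-ξ₂ : ℝ) + ξ₁ ≠ 0 := by intro h; linarith [h]
  field_simp
  ring
end

section
/- Let W^{(u)} : [0,∞) → (0,∞) be continuously differentiable with W^{(u)'} > 0, and suppose W^{(u)}(x) = e^{Φ(u)x} W_{Φ(u)}(x) where W_{Φ(u)} is positive, increasing, concave and bounded above by M. Then the function x ↦ W^{(u)}(x)/W^{(u)'}(x) is monotone increasing on [0,∞) and bounded above by 1/Φ(u). -/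
open Set

/-- If W^{(u)}(x) = e^{Φ(u)x} W_{Φ(u)}(x) with W_{Φ(u)} positive, increasing,
concave and bounded above by M, then W^{(u)}/W^{(u)'} is monotone increasing on
[0,∞) and bounded above by 1/Φ(u). -/
theorem ratio_monotone_and_bounded
    (Φu M : ℝ) (hΦu : 0 < Φu)
    (Wu WΦ : ℝ → ℝ)
    (hWuC1 : ContDiff ℝ 1 Wu)
    (hWupos : ∀ x : ℝ, 0 ≤ x → 0 < Wu x)
    (hWu'pos : ∀ x : ℝ, 0 ≤ x → 0 < deriv Wu x)
    (hfact : ∀ x : ℝ, 0 ≤ x → Wu x = Real.exp (Φu * x) * WΦ x)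
    (hWΦpos : ∀ x : ℝ, 0 ≤ x → 0 < WΦ x)
    (hWΦmono : MonotoneOn WΦ (Ici 0))
    (hWΦconc : ConcaveOn ℝ (Ici 0) WΦ)
    (hWΦbdd : ∀ x : ℝ, 0 ≤ x → WΦ x ≤ M) :
    MonotoneOn (fun x => Wu x / deriv Wu x) (Ici 0) ∧
      ∀ x : ℝ, 0 ≤ x → Wu x / deriv Wu x ≤ 1 / Φu := by
  have hWud : Differentiable ℝ Wu := hWuC1.differentiable one_ne_zero
  set g : ℝ → ℝ := fun x => Real.exp (-Φu * x) * Wu x with hg_def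
  -- g equals WΦ on Ici 0
  have hgeq : ∀ x : ℝ, 0 ≤ x → g x = WΦ x := by
    intro x hx
    simp only [hg_def, hfact x hx]
    rw [← mul_assoc, ← Real.exp_add]
    simp
  -- derivative of g
  have hgd : ∀ x : ℝ, HasDerivAt g (Real.exp (-Φu * x) * (deriv Wu x - Φu * Wu x)) x := by
    intro x
    have h1 : HasDerivAt (fun y : ℝ => Real.exp (-Φu * y)) (-Φu * Real.exp (-Φu * x)) x := by
      have := (Real.hasDerivAt_exp (-Φu * x)).comp x
        ((hasDerivAt_id x).const_mul (-Φu))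
      simpa [Function.comp_def, mul_comm] using this
    have : HasDerivAt (fun y => Real.exp (-Φu * y) * Wu y) _ x := h1.mul (hWud x).hasDerivAt
    convert this using 1
    ring
  set h : ℝ → ℝ := fun x => Real.exp (-Φu * x) * (deriv Wu x - Φu * Wu x) with hh_def
  have hderivg : ∀ x : ℝ, deriv g x = h x := fun x => (hgd x).deriv
  have hgdiff : ∀ x : ℝ, DifferentiableAt ℝ g x := fun x => (hgd x).differentiableAt
  -- g is positive on Ici 0
  have hgpos : ∀ x : ℝ, 0 ≤ x → 0 < g x := by
    intro x hx
    exact mul_pos (Real.exp_pos _) (hWupos x hx)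
  -- g monotone and concave on Ici 0 via WΦ
  have hgmono : MonotoneOn g (Ici 0) := by
    intro a ha b hb hab
    rw [hgeq a ha, hgeq b hb]
    exact hWΦmono ha hb hab
  have hgconc : ConcaveOn ℝ (Ici 0) g := by
    refine ⟨hWΦconc.1, ?_⟩
    intro a ha b hb p q hp hq hpq
    have hab : p • a + q • b ∈ Ici (0:ℝ) := hWΦconc.1 ha hb hp hq hpq
    rw [hgeq a ha, hgeq b hb, hgeq _ hab]
    exact hWΦconc.2 ha hb hp hq hpq
  -- h = deriv g is nonneg on Ici 0
  have hhnn : ∀ x : ℝ, 0 ≤ x → 0 ≤ h x := by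
    intro x hx
    have hx1 : (0:ℝ) ≤ x + 1 := by linarith
    have hslope : 0 ≤ slope g x (x + 1) := by
      rw [slope_def_field]
      have := hgmono hx hx1 (by linarith : x ≤ x + 1)
      apply div_nonneg (by linarith) (by linarith)
    have := hgconc.slope_le_deriv hx hx1 (by linarith) (hgdiff x)
    rw [hderivg x] at this
    linarith
  -- h is antitone on Ici 0
  have hhanti : AntitoneOn h (Ici 0) := by
    have := hgconc.antitoneOn_deriv (fun x _ => hgdiff x)
    intro a ha b hb hab
    have := this ha hb hab
    rwa [hderivg a, hderivg b] at this
  -- ratio formula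
  have hratio : ∀ x : ℝ, Wu x / deriv Wu x = g x / (Φu * g x + h x) := by
    intro x
    have hexp : Real.exp (-Φu * x) * Real.exp (Φu * x) = 1 := by
      rw [← Real.exp_add]; simp
    have hWux : Wu x = Real.exp (Φu * x) * g x := by
      simp only [hg_def]
      rw [← mul_assoc, mul_comm (Real.exp (Φu * x)), hexp, one_mul]
    have hWu'x : deriv Wu x = Real.exp (Φu * x) * (Φu * g x + h x) := by
      have hexp' : Real.exp (Φu * x) * Real.exp (-Φu * x) = 1 := by
        rw [← Real.exp_add]; simp
      simp only [hh_def]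
      linear_combination (-(deriv Wu x - Φu * Wu x)) * hexp' + Φu * hWux
    rw [hWux, hWu'x, mul_div_mul_left _ _ (Real.exp_ne_zero _)]
  constructor
  · intro x hx y hy hxy
    simp only [mem_Ici] at hx hy
    show Wu x / deriv Wu x ≤ Wu y / deriv Wu y
    rw [hratio x, hratio y]
    have hgx := hgpos x hx
    have hgy := hgpos y hy
    have hhx := hhnn x hx
    have hhy := hhnn y hy
    have hdx : 0 < Φu * g x + h x := by positivity
    have hdy : 0 < Φu * g y + h y := by positivity
    rw [div_le_div_iff₀ hdx hdy]
    have h1 : g x ≤ g y := hgmono hx hy hxy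
    have h2 : h y ≤ h x := hhanti hx hy hxy
    nlinarith
  · intro x hx
    rw [hratio x]
    have hgx := hgpos x hx
    have hhx := hhnn x hx
    have hdx : 0 < Φu * g x + h x := by positivity
    rw [div_le_div_iff₀ hdx hΦu]
    nlinarith
end

section
/- Under the hypotheses of the previous statement (W^{(r)} positive increasing C¹, W^{(r)}/W^{(r)'} strictly increasing), for all b > 0: Z^{(r)}(b) − r W^{(r)}(b)²/W^{(r)'}(b) < 1 − r W^{(r)}(0)²/W^{(r)'}(0). -/
open Set intervalIntegral

/-- Existence inequality: Z^{(r)}(b) − r W^{(r)}(b)²/W^{(r)'}(b)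
< 1 − r W^{(r)}(0)²/W^{(r)'}(0) for all b > 0. -/
theorem existence_inequality
    (r : ℝ) (hr : 0 < r)
    (W W' : ℝ → ℝ)
    (hW : ∀ x : ℝ, HasDerivAt W (W' x) x)
    (hW'cont : Continuous W')
    (hWpos : ∀ x : ℝ, 0 ≤ x → 0 < W x)
    (hW'pos : ∀ x : ℝ, 0 ≤ x → 0 < W' x)
    (hmono : StrictMonoOn (fun x => W x / W' x) (Ici 0))
    (Z : ℝ → ℝ)
    (hZ : ∀ x : ℝ, Z x = 1 + r * ∫ z in (0 : ℝ)..x, W z) :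
    ∀ b : ℝ, 0 < b →
      Z b - r * (W b ^ 2 / W' b) < 1 - r * (W 0 ^ 2 / W' 0) := by
  intro b hb
  have hWcont : Continuous W :=
    continuous_iff_continuousAt.2 fun x => (hW x).continuousAt
  set C : ℝ := W b / W' b with hC
  have hW'b := hW'pos b hb.le
  have hW'0 := hW'pos 0 le_rfl
  have hW0 := hWpos 0 le_rfl
  -- pointwise bound
  have hle : ∀ z ∈ Icc (0:ℝ) b, W z ≤ C * W' z := by
    intro z hz
    have h1 : W z / W' z ≤ C := by
      rcases eq_or_lt_of_le hz.2 with h | h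
      · rw [h]
      · exact (hmono hz.1 (le_trans hz.1 hz.2) h).le
    have h2 := hW'pos z hz.1
    calc W z = (W z / W' z) * W' z := by field_simp
      _ ≤ C * W' z := mul_le_mul_of_nonneg_right h1 h2.le
  -- integral bound
  have hint : ∫ z in (0:ℝ)..b, W z ≤ ∫ z in (0:ℝ)..b, C * W' z := by
    apply intervalIntegral.integral_mono_on hb.le
    · exact hWcont.intervalIntegrable 0 b
    · exact (hW'cont.const_smul C).intervalIntegrable 0 b
    · exact hle
  have hftc : ∫ z in (0:ℝ)..b, C * W' z = C * (W b - W 0) := by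
    rw [intervalIntegral.integral_const_mul,
      intervalIntegral.integral_eq_sub_of_hasDerivAt
        (fun x _ => hW x) (hW'cont.intervalIntegrable 0 b)]
  have hstrict : W 0 ^ 2 / W' 0 < C * W 0 := by
    have := hmono (le_refl (0:ℝ) : (0:ℝ) ∈ Ici (0:ℝ)) (mem_Ici.2 hb.le) hb
    simp only at this
    have := mul_lt_mul_of_pos_right this hW0
    calc W 0 ^ 2 / W' 0 = (W 0 / W' 0) * W 0 := by ring
      _ < C * W 0 := this
  rw [hZ b]
  have hCeq : C * W b = W b ^ 2 / W' b := by
    rw [hC, div_mul_eq_mul_div, ← sq]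
  nlinarith [hint, hftc, hstrict, mul_lt_mul_of_pos_left hstrict hr]
end

section
/- Let α̃ < 0, and let W^{(r)}, Z^{(r)} be as above with W^{(r)}/W^{(r)'} strictly increasing. Fix b > 0 and define f(h) = α̃ Z^{(r)}(b−h) − r α̃ (W^{(r)}(b−h))²/W^{(r)'}(b−h) − γ for h ∈ [0,b]. If α̃(Z^{(r)}(b) − r W^{(r)}(b)²/W^{(r)'}(b)) > γ > α̃(1 − r W^{(r)}(0)²/W^{(r)'}(0)), then f is strictly decreasing on [0,b], f(0) > 0, f(b) < 0, and f has a unique root h* ∈ (0,b). -/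
open Set intervalIntegral

/-- Proposition 4: under the stated bounds on the switching cost γ, the function
f(h) = α̃Z^{(r)}(b−h) − rα̃ W^{(r)}(b−h)²/W^{(r)'}(b−h) − γ is strictly decreasing
on [0,b], positive at 0, negative at b, and has a unique root h* ∈ (0,b). -/
theorem unique_exercise_level
    (r alphat γ b : ℝ) (hr : 0 < r) (halphat : alphat < 0) (hb : 0 < b)
    (W W' : ℝ → ℝ)
    (hW : ∀ x : ℝ, HasDerivAt W (W' x) x)
    (hW'cont : Continuous W')
    (hWpos : ∀ x : ℝ, 0 ≤ x → 0 < W x)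
    (hW'pos : ∀ x : ℝ, 0 ≤ x → 0 < W' x)
    (hmono : StrictMonoOn (fun x => W x / W' x) (Ici 0))
    (Z : ℝ → ℝ)
    (hZ : ∀ x : ℝ, Z x = 1 + r * ∫ z in (0 : ℝ)..x, W z)
    (f : ℝ → ℝ)
    (hf : ∀ h : ℝ, f h = alphat * Z (b - h)
        - r * alphat * (W (b - h)) ^ 2 / W' (b - h) - γ)
    (hγupper : alphat * (Z b - r * (W b ^ 2 / W' b)) > γ)
    (hγlower : γ > alphat * (1 - r * (W 0 ^ 2 / W' 0))) :
    StrictAntiOn f (Icc 0 b) ∧ f 0 > 0 ∧ f b < 0 ∧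
      ∃! h : ℝ, h ∈ Ioo 0 b ∧ f h = 0 := by
  have Wcont : Continuous W := continuous_iff_continuousAt.mpr fun x => (hW x).continuousAt
  have Wint : ∀ a c : ℝ, IntervalIntegrable W MeasureTheory.volume a c :=
    fun a c => Wcont.intervalIntegrable a c
  set φ : ℝ → ℝ := fun t => W t / W' t with hφ
  -- key monotonicity of g x = Z x - r * W x ^ 2 / W' x
  have key : ∀ x y : ℝ, 0 ≤ x → x < y →
      Z y - r * (W y) ^ 2 / W' y < Z x - r * (W x) ^ 2 / W' x := by
    intro x y hx hxy
    have hW'int : IntervalIntegrable W' MeasureTheory.volume x y :=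
      hW'cont.intervalIntegrable x y
    have hFTC : ∫ t in x..y, W' t = W y - W x :=
      intervalIntegral.integral_eq_sub_of_hasDerivAt (fun t _ => hW t) hW'int
    have hZdiff : Z y - Z x = r * ∫ t in x..y, W t := by
      rw [hZ, hZ, ← intervalIntegral.integral_add_adjacent_intervals (Wint 0 x) (Wint x y)]
      ring
    have hne : ∀ t ∈ Icc x y, W' t ≠ 0 := fun t ht =>
      (hW'pos t (hx.trans ht.1)).ne'
    have hφcont : ContinuousOn φ (Icc x y) :=
      Wcont.continuousOn.div hW'cont.continuousOn hne
    -- rewrite ∫ W as ∫ W' * φ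
    have hWφ : (∫ t in x..y, W t) = ∫ t in x..y, W' t * φ t := by
      apply intervalIntegral.integral_congr
      intro t ht
      rw [uIcc_of_le hxy.le] at ht
      field_simp [hφ, hne t ht]
      simp only [hφ]; field_simp [hne t ht]
    have hint2 : IntervalIntegrable (fun t => W' t * (φ y - φ t)) MeasureTheory.volume x y := by
      apply ContinuousOn.intervalIntegrable
      rw [uIcc_of_le hxy.le]
      exact hW'cont.continuousOn.mul (continuousOn_const.sub hφcont)
    have hpos : 0 < ∫ t in x..y, W' t * (φ y - φ t) := by
      apply intervalIntegral_pos_of_pos_on hint2 _ hxy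
      intro t ht
      have ht0 : (0:ℝ) ≤ t := hx.trans ht.1.le
      have h1 : φ t < φ y := hmono ht0 (ht0.trans ht.2.le) ht.2
      have h2 : 0 < W' t := hW'pos t ht0
      nlinarith
    have hsplit : (∫ t in x..y, W' t * (φ y - φ t))
        = φ y * (W y - W x) - ∫ t in x..y, W' t * φ t := by
      have : (fun t => W' t * (φ y - φ t)) = fun t => φ y * W' t - W' t * φ t := by
        funext t; ring
      have hWφint : IntervalIntegrable (fun t => W' t * φ t) MeasureTheory.volume x y := by
        apply ContinuousOn.intervalIntegrable
        rw [uIcc_of_le hxy.le]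
        exact hW'cont.continuousOn.mul hφcont
      rw [this, intervalIntegral.integral_sub (hW'int.const_mul (φ y)) hWφint,
        intervalIntegral.integral_const_mul, hFTC]
    have hineq : (∫ t in x..y, W t) < φ y * (W y - W x) := by
      rw [hWφ]; linarith [hpos, hsplit]
    have hWx : 0 < W x := hWpos x hx
    have hφxy : φ x < φ y := hmono hx (hx.trans hxy.le) hxy
    have hsq : ∀ t : ℝ, 0 ≤ t → (W t) ^ 2 / W' t = W t * φ t := by
      intro t ht
      have := (hW'pos t ht).ne'
      field_simp [hφ]; simp only [hφ]; field_simp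
    have ex : r * (W x) ^ 2 / W' x = r * (W x * φ x) := by
      rw [mul_div_assoc, hsq x hx]
    have ey : r * (W y) ^ 2 / W' y = r * (W y * φ y) := by
      rw [mul_div_assoc, hsq y (hx.trans hxy.le)]
    rw [ex, ey]
    have : Z y - Z x < r * (φ y * (W y - W x)) := by
      rw [hZdiff]
      exact (mul_lt_mul_iff_right₀ hr).mpr hineq
    nlinarith [mul_pos (mul_pos hr hWx) (sub_pos.mpr hφxy)]
  -- strict antitonicity of f
  have hanti : StrictAntiOn f (Icc 0 b) := by
    intro h1 hh1 h2 hh2 h12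
    rw [hf, hf]
    have hk := key (b - h2) (b - h1) (by linarith [hh2.2]) (by linarith)
    have e1 : alphat * Z (b - h1) - r * alphat * (W (b - h1)) ^ 2 / W' (b - h1)
        = alphat * (Z (b - h1) - r * (W (b - h1)) ^ 2 / W' (b - h1)) := by ring
    have e2 : alphat * Z (b - h2) - r * alphat * (W (b - h2)) ^ 2 / W' (b - h2)
        = alphat * (Z (b - h2) - r * (W (b - h2)) ^ 2 / W' (b - h2)) := by ring
    have := mul_lt_mul_of_neg_left hk halphat
    linarith
  have hf0 : f 0 > 0 := by
    rw [hf]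
    simp only [sub_zero]
    have e : alphat * Z b - r * alphat * W b ^ 2 / W' b
        = alphat * (Z b - r * (W b ^ 2 / W' b)) := by ring
    linarith
  have hZ0 : Z 0 = 1 := by rw [hZ]; simp
  have hfb : f b < 0 := by
    rw [hf]
    simp only [sub_self, hZ0]
    have e : alphat * 1 - r * alphat * W 0 ^ 2 / W' 0
        = alphat * (1 - r * (W 0 ^ 2 / W' 0)) := by ring
    linarith
  refine ⟨hanti, hf0, hfb, ?_⟩
  -- continuity of f on Icc 0 b
  have hZcont : Continuous Z := by
    have : Continuous fun x => 1 + r * ∫ z in (0:ℝ)..x, W z :=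
      continuous_const.add (continuous_const.mul
        (intervalIntegral.continuous_primitive Wint 0))
    exact (funext hZ : Z = _) ▸ this
  have hfcont : ContinuousOn f (Icc 0 b) := by
    have : ∀ h ∈ Icc (0:ℝ) b, W' (b - h) ≠ 0 := fun h hh =>
      (hW'pos (b - h) (by linarith [hh.2])).ne'
    have hfe : f = fun h => alphat * Z (b - h)
        - r * alphat * (W (b - h)) ^ 2 / W' (b - h) - γ := funext hf
    rw [hfe]
    apply ContinuousOn.sub _ continuousOn_const
    apply ContinuousOn.sub
    · exact (continuousOn_const.mul ((hZcont.comp (continuous_const.sub continuous_id)).continuousOn))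
    · exact ContinuousOn.div
        (continuousOn_const.mul (((Wcont.comp (continuous_const.sub continuous_id)).pow 2).continuousOn))
        ((hW'cont.comp (continuous_const.sub continuous_id)).continuousOn) this
  -- existence via IVT
  obtain ⟨c, hc, hfc⟩ : ∃ c ∈ Ioo (0:ℝ) b, f c = 0 := by
    have : (0:ℝ) ∈ Ioo (f b) (f 0) := ⟨hfb, hf0⟩
    obtain ⟨c, hc, hfc⟩ := intermediate_value_Ioo' hb.le hfcont this
    exact ⟨c, hc, hfc⟩
  refine ⟨c, ⟨hc, hfc⟩, ?_⟩
  rintro c' ⟨hc', hfc'⟩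
  have hinj := hanti.injOn
  exact hinj (Ioo_subset_Icc_self hc') (Ioo_subset_Icc_self hc) (hfc'.trans hfc.symm)
end

section
/- Define G_b(y) = α̃ Z^{(r)}(b−y) − ((p̃ + r α̃ W^{(r)}(b))/W^{(r)'}(b)) W^{(r)}(b−y) − γ with α̃ < 0, p̃ < 0, r > 0, W^{(r)} positive increasing C¹, Z^{(r)}(x) = 1 + r∫₀^x W^{(r)}, and suppose y ↦ W^{(r)}(b−y)/W^{(r)}(b) is such that W^{(r)}/W^{(r)'} is increasing. Then G_b'(y) = p̃ W^{(r)'}(b−y)/W^{(r)'}(b) + r α̃ (W^{(r)}(b))²/W^{(r)'}(b) · d/db(W^{(r)}(b−y)/W^{(r)}(b)) ≤ 0 for all 0 ≤ y ≤ b; i.e., G_b is monotone decreasing on [0,b]. -/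
open Set intervalIntegral

/-- The payoff function G_b is monotone decreasing on [0,b]: its derivative
equals p̃ W^{(r)'}(b−y)/W^{(r)'}(b) + rα̃ W^{(r)}(b)²/W^{(r)'}(b) · d/db(W^{(r)}(b−y)/W^{(r)}(b))
and is nonpositive. -/
theorem payoff_derivative_nonpositive
    (r alphat ptilde γ b : ℝ)
    (hr : 0 < r) (halphat : alphat < 0) (hptilde : ptilde < 0) (hb : 0 < b)
    (W W' : ℝ → ℝ)
    (hW : ∀ x : ℝ, HasDerivAt W (W' x) x)
    (hW'cont : Continuous W')
    (hWpos : ∀ x : ℝ, 0 ≤ x → 0 < W x)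
    (hWmono : StrictMonoOn W (Ici 0))
    (hW'pos : ∀ x : ℝ, 0 ≤ x → 0 < W' x)
    (hmono : MonotoneOn (fun x => W x / W' x) (Ici 0))
    (Z : ℝ → ℝ)
    (hZ : ∀ x : ℝ, Z x = 1 + r * ∫ z in (0 : ℝ)..x, W z)
    (G : ℝ → ℝ)
    (hG : ∀ y : ℝ, G y = alphat * Z (b - y)
        - (ptilde + r * alphat * W b) / W' b * W (b - y) - γ) :
    ∀ y : ℝ, y ∈ Icc 0 b →
      deriv G y = ptilde * W' (b - y) / W' b
          + r * alphat * (W b) ^ 2 / W' b * deriv (fun t => W (t - y) / W t) b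
        ∧ deriv G y ≤ 0 := by
  intro y hy
  obtain ⟨hy0, hyb⟩ := hy
  have hby0 : (0 : ℝ) ≤ b - y := by linarith
  have hWb : 0 < W b := hWpos b hb.le
  have hW'b : 0 < W' b := hW'pos b hb.le
  have hW'by : 0 < W' (b - y) := hW'pos _ hby0
  have hWby : 0 < W (b - y) := hWpos _ hby0
  have hWcont : Continuous W :=
    continuous_iff_continuousAt.mpr fun x => (hW x).differentiableAt.continuousAt
  -- derivative of Z
  have hZeq : Z = fun x => 1 + r * ∫ z in (0 : ℝ)..x, W z := funext hZ
  have hZderiv : ∀ x : ℝ, HasDerivAt Z (r * W x) x := by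
    intro x
    have h1 : HasDerivAt (fun u => ∫ z in (0 : ℝ)..u, W z) (W x) x :=
      (hWcont.integral_hasStrictDerivAt 0 x).hasDerivAt
    have h2 := (h1.const_mul r).const_add 1
    rw [hZeq]
    exact h2
  set C : ℝ := (ptilde + r * alphat * W b) / W' b with hC
  -- derivative of G
  have hsub : HasDerivAt (fun t : ℝ => b - t) (-1 : ℝ) y := by
    simpa using (hasDerivAt_id y).const_sub b
  have h1 : HasDerivAt (fun t : ℝ => Z (b - t)) (r * W (b - y) * (-1)) y :=
    (hZderiv (b - y)).comp y hsub
  have h2 : HasDerivAt (fun t : ℝ => W (b - t)) (W' (b - y) * (-1)) y :=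
    (hW (b - y)).comp y hsub
  have hGd : HasDerivAt G
      (alphat * (r * W (b - y) * (-1)) - C * (W' (b - y) * (-1))) y := by
    have : G = fun t => alphat * Z (b - t) - C * W (b - t) - γ := funext hG
    rw [this]
    exact ((h1.const_mul alphat).sub (h2.const_mul C)).sub_const γ
  have hGderiv : deriv G y = -(alphat * r * W (b - y)) + C * W' (b - y) := by
    rw [hGd.deriv]; ring
  -- derivative of the quotient at b
  have hnum : HasDerivAt (fun t : ℝ => W (t - y)) (W' (b - y) * 1) b :=
    (hW (b - y)).comp b (by simpa using (hasDerivAt_id b).sub_const y)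
  have hdiv : HasDerivAt (fun t : ℝ => W (t - y) / W t)
      ((W' (b - y) * 1 * W b - W (b - y) * W' b) / (W b) ^ 2) b :=
    hnum.div (hW b) hWb.ne'
  have key : W (b - y) * W' b ≤ W b * W' (b - y) := by
    have h := hmono (mem_Ici.mpr hby0) (mem_Ici.mpr hb.le) (by linarith)
    have := (div_le_div_iff₀ hW'by hW'b).mp h
    linarith
  constructor
  · rw [hGderiv, hdiv.deriv, hC]
    field_simp
    ring
  · rw [hGderiv, hC]
    have h1 : ptilde * W' (b - y) < 0 := mul_neg_of_neg_of_pos hptilde hW'by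
    have h2 : r * alphat * (W b * W' (b - y) - W (b - y) * W' b) ≤ 0 :=
      mul_nonpos_of_nonpos_of_nonneg (by nlinarith) (by linarith)
    have heq : (-(alphat * r * W (b - y))
        + (ptilde + r * alphat * W b) / W' b * W' (b - y)) * W' b
        = ptilde * W' (b - y)
          + r * alphat * (W b * W' (b - y) - W (b - y) * W' b) := by
      field_simp
      ring
    nlinarith [heq, h1, h2, hW'b]
end

section
/- Let h* ∈ (0,b) satisfy α̃ Z^{(r)}(b−h*) − r α̃ (W^{(r)}(b−h*))²/W^{(r)'}(b−h*) − γ = 0. Define Ṽ_b(y) = G_b(h*) · W^{(r)}(b−y)/W^{(r)}(b−h*) for y ∈ [h*, b], where G_b(y) = α̃ Z^{(r)}(b−y) − ((p̃ + r α̃ W^{(r)}(b))/W^{(r)'}(b)) W^{(r)}(b−y) − γ. Then the smooth pasting condition holds: Ṽ_b'(h*) = G_b'(h*). -/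
open Set intervalIntegral

/-- Smooth pasting at the optimal boundary h*: the value candidate
Ṽ_b(y) = G_b(h*) W^{(r)}(b−y)/W^{(r)}(b−h*) has the same derivative as the payoff
G_b at y = h*, regardless of path regularity. -/
theorem smooth_pasting
    (r alphat ptilde γ b hstar : ℝ)
    (hr : 0 < r) (hhstar : 0 < hstar) (hstarb : hstar < b)
    (W W' : ℝ → ℝ)
    (hW : ∀ x : ℝ, HasDerivAt W (W' x) x)
    (hW'cont : Continuous W')
    (hWpos : ∀ x : ℝ, 0 ≤ x → 0 < W x)
    (hW'pos : ∀ x : ℝ, 0 ≤ x → 0 < W' x)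
    (Z : ℝ → ℝ)
    (hZ : ∀ x : ℝ, Z x = 1 + r * ∫ z in (0 : ℝ)..x, W z)
    (hroot : alphat * Z (b - hstar)
        - r * alphat * (W (b - hstar)) ^ 2 / W' (b - hstar) - γ = 0)
    (G V : ℝ → ℝ)
    (hG : ∀ y : ℝ, G y = alphat * Z (b - y)
        - (ptilde + r * alphat * W b) / W' b * W (b - y) - γ)
    (hV : ∀ y : ℝ, V y = G hstar * W (b - y) / W (b - hstar)) :
    deriv V hstar = deriv G hstar := by
  have hWcont : Continuous W := continuous_iff_continuousAt.2 fun x => (hW x).continuousAt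
  set K : ℝ := (ptilde + r * alphat * W b) / W' b with hK
  have hu : (0 : ℝ) ≤ b - hstar := by linarith
  have hWu : 0 < W (b - hstar) := hWpos _ hu
  have hW'u : 0 < W' (b - hstar) := hW'pos _ hu
  -- derivative of Z
  have hZd : ∀ x : ℝ, HasDerivAt Z (r * W x) x := by
    intro x
    have h1 := (hWcont.integral_hasStrictDerivAt 0 x).hasDerivAt
    have h2 : HasDerivAt (fun u => 1 + r * ∫ z in (0 : ℝ)..u, W z) (r * W x) x :=
      (h1.const_mul r).const_add 1
    have : Z = fun u => 1 + r * ∫ z in (0 : ℝ)..u, W z := funext hZ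
    rw [this]; exact h2
  -- inner function y ↦ b - y
  have hinner : HasDerivAt (fun y : ℝ => b - y) (-1) hstar := by
    exact (hasDerivAt_id' hstar).const_sub b
  have hZc : HasDerivAt (fun y => Z (b - y)) (r * W (b - hstar) * (-1)) hstar :=
    (hZd (b - hstar)).comp hstar hinner
  have hWc : HasDerivAt (fun y => W (b - y)) (W' (b - hstar) * (-1)) hstar :=
    (hW (b - hstar)).comp hstar hinner
  have hGd : HasDerivAt G
      (alphat * (r * W (b - hstar) * (-1)) - K * (W' (b - hstar) * (-1))) hstar := by
    have h2 : HasDerivAt (fun y => alphat * Z (b - y) - K * W (b - y) - γ)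
        (alphat * (r * W (b - hstar) * (-1)) - K * (W' (b - hstar) * (-1))) hstar :=
      ((hZc.const_mul alphat).sub (hWc.const_mul K)).sub_const γ
    have : G = fun y => alphat * Z (b - y) - K * W (b - y) - γ := funext hG
    rw [this]; exact h2
  have hVd : HasDerivAt V
      (G hstar / W (b - hstar) * (W' (b - hstar) * (-1))) hstar := by
    have h2 : HasDerivAt (fun y => G hstar / W (b - hstar) * W (b - y))
        (G hstar / W (b - hstar) * (W' (b - hstar) * (-1))) hstar :=
      hWc.const_mul _
    have : V = fun y => G hstar / W (b - hstar) * W (b - y) := by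
      funext y; rw [hV y]; ring
    rw [this]; exact h2
  rw [hVd.deriv, hGd.deriv]
  have hGh : G hstar = alphat * Z (b - hstar) - K * W (b - hstar) - γ := hG hstar
  have hroot' : alphat * Z (b - hstar) * W' (b - hstar)
      - r * alphat * (W (b - hstar)) ^ 2 - γ * W' (b - hstar) = 0 := by
    have := hroot
    field_simp at this
    linarith [this]
  rw [hGh]
  field_simp
  ring_nf
  nlinarith [hroot', hWu.ne', hW'u.ne']
end

section
/- For y ∈ [h*, b], the difference of derivatives satisfies Ṽ_b'(y) − G_b'(y) = r α̃ W^{(r)'}(b−y) [W^{(r)}(b−y)/W^{(r)'}(b−y) − W^{(r)}(b−h*)/W^{(r)'}(b−h*)] ≥ 0; combined with Ṽ_b(h*) = G_b(h*), this yields the majorant property Ṽ_b(y) ≥ G_b(y) for all y ∈ [h*, b]. -/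
open Set intervalIntegral

/-- Majorant property: Ṽ_b'(y) − G_b'(y) = rα̃W^{(r)'}(b−y)[W^{(r)}(b−y)/W^{(r)'}(b−y)
− W^{(r)}(b−h*)/W^{(r)'}(b−h*)] ≥ 0 on [h*,b], and hence Ṽ_b ≥ G_b on [h*,b]. -/
theorem majorant_property
    (r alphat ptilde γ b hstar : ℝ)
    (hr : 0 < r) (halphat : alphat < 0)
    (hhstar : 0 < hstar) (hstarb : hstar < b)
    (W W' : ℝ → ℝ)
    (hW : ∀ x : ℝ, HasDerivAt W (W' x) x)
    (hW'cont : Continuous W')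
    (hWpos : ∀ x : ℝ, 0 ≤ x → 0 < W x)
    (hW'pos : ∀ x : ℝ, 0 ≤ x → 0 < W' x)
    (hmono : MonotoneOn (fun x => W x / W' x) (Ici 0))
    (Z : ℝ → ℝ)
    (hZ : ∀ x : ℝ, Z x = 1 + r * ∫ z in (0 : ℝ)..x, W z)
    (hroot : alphat * Z (b - hstar)
        - r * alphat * (W (b - hstar)) ^ 2 / W' (b - hstar) - γ = 0)
    (G V : ℝ → ℝ)
    (hG : ∀ y : ℝ, G y = alphat * Z (b - y)
        - (ptilde + r * alphat * W b) / W' b * W (b - y) - γ)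
    (hV : ∀ y : ℝ, V y = G hstar * W (b - y) / W (b - hstar)) :
    (∀ y ∈ Icc hstar b,
        deriv V y - deriv G y
          = r * alphat * W' (b - y)
              * (W (b - y) / W' (b - y) - W (b - hstar) / W' (b - hstar)) ∧
        0 ≤ deriv V y - deriv G y) ∧
      V hstar = G hstar ∧
      ∀ y ∈ Icc hstar b, G y ≤ V y := by
  have hWdiff : Differentiable ℝ W := fun x => (hW x).differentiableAt
  have hWcont : Continuous W := hWdiff.continuous
  set c : ℝ := (ptilde + r * alphat * W b) / W' b with hc
  have hWbh : 0 < W (b - hstar) := hWpos _ (by linarith)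
  have hW'bh : 0 < W' (b - hstar) := hW'pos _ (by linarith)
  -- inner derivative
  have hinner : ∀ y : ℝ, HasDerivAt (fun y => W (b - y)) (-(W' (b - y))) y := by
    intro y
    have h0 : HasDerivAt (fun y : ℝ => b - y) (-1 : ℝ) y := by
      exact (hasDerivAt_id' y).const_sub b
    have h := (hW (b - y)).comp y h0; rw [mul_neg_one] at h; exact h
  -- derivative of V
  have hVd : ∀ y : ℝ, HasDerivAt V (-(G hstar) * W' (b - y) / W (b - hstar)) y := by
    intro y
    have hVfun : V = fun y => G hstar * W (b - y) / W (b - hstar) := funext hV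
    rw [hVfun]
    have := ((hinner y).const_mul (G hstar)).div_const (W (b - hstar))
    rw [show -(G hstar) * W' (b - y) / W (b - hstar) = G hstar * -W' (b - y) / W (b - hstar) by ring]
    exact this
  -- derivative of Z ∘ (b - ·)
  have hZd : ∀ y : ℝ, HasDerivAt (fun y => Z (b - y)) (-(r * W (b - y))) y := by
    intro y
    have hint : HasDerivAt (fun u => ∫ z in (0:ℝ)..u, W z) (W (b - y)) (b - y) :=
      intervalIntegral.integral_hasDerivAt_right (hWcont.intervalIntegrable _ _)
        (hWcont.stronglyMeasurableAtFilter _ _) hWcont.continuousAt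
    have hZfun : Z = fun x => 1 + r * ∫ z in (0:ℝ)..x, W z := funext hZ
    have hZx : HasDerivAt Z (r * W (b - y)) (b - y) := by
      rw [hZfun]; exact ((hint.const_mul r).const_add 1)
    have h0 : HasDerivAt (fun y : ℝ => b - y) (-1 : ℝ) y := by
      exact (hasDerivAt_id' y).const_sub b
    have h := hZx.comp y h0; rw [mul_neg_one] at h; exact h
  -- derivative of G
  have hGd : ∀ y : ℝ, HasDerivAt G (-(alphat * r * W (b - y)) + c * W' (b - y)) y := by
    intro y
    have hGfun : G = fun y => alphat * Z (b - y) - c * W (b - y) - γ := funext hG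
    rw [hGfun]
    have := (((hZd y).const_mul alphat).sub ((hinner y).const_mul c)).sub_const γ
    rw [show -(alphat * r * W (b - y)) + c * W' (b - y) = alphat * -(r * W (b - y)) - c * -W' (b - y) by ring]
    exact this
  -- key relation from hroot
  have hGh : G hstar = r * alphat * (W (b - hstar)) ^ 2 / W' (b - hstar)
      - c * W (b - hstar) := by
    rw [hG hstar]; linarith [hroot]
  -- the derivative identity + sign
  have hkey : ∀ y ∈ Icc hstar b,
      deriv V y - deriv G y
        = r * alphat * W' (b - y)
            * (W (b - y) / W' (b - y) - W (b - hstar) / W' (b - hstar)) ∧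
      0 ≤ deriv V y - deriv G y := by
    intro y hy
    obtain ⟨hy1, hy2⟩ := hy
    have hby : (0:ℝ) ≤ b - y := by linarith
    have hW'by : 0 < W' (b - y) := hW'pos _ hby
    have heq : deriv V y - deriv G y
        = r * alphat * W' (b - y)
            * (W (b - y) / W' (b - y) - W (b - hstar) / W' (b - hstar)) := by
      rw [(hVd y).deriv, (hGd y).deriv, hGh]
      field_simp
      ring
    refine ⟨heq, ?_⟩
    rw [heq]
    have hratio : W (b - y) / W' (b - y) ≤ W (b - hstar) / W' (b - hstar) :=
      hmono (mem_Ici.2 hby) (mem_Ici.2 (by linarith)) (by linarith)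
    have h1 : r * alphat * W' (b - y) ≤ 0 := by
      have := mul_pos hr hW'by
      nlinarith
    have h2 : W (b - y) / W' (b - y) - W (b - hstar) / W' (b - hstar) ≤ 0 := by linarith
    nlinarith [mul_nonneg (neg_nonneg.2 h1) (neg_nonneg.2 h2)]
  have hVG : V hstar = G hstar := by
    rw [hV hstar]
    field_simp
  refine ⟨hkey, hVG, ?_⟩
  -- monotone argument
  have hVdiff : Differentiable ℝ V := fun y => (hVd y).differentiableAt
  have hGdiff : Differentiable ℝ G := fun y => (hGd y).differentiableAt
  have hF : MonotoneOn (fun y => V y - G y) (Icc hstar b) := by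
    apply monotoneOn_of_deriv_nonneg (convex_Icc hstar b)
      ((hVdiff.sub hGdiff).continuous.continuousOn)
      ((hVdiff.sub hGdiff).differentiableOn)
    intro x hx
    rw [interior_Icc] at hx
    have hx' : x ∈ Icc hstar b := ⟨le_of_lt hx.1, le_of_lt hx.2⟩
    have := (hkey x hx').2
    rw [deriv_sub (hVdiff x) (hGdiff x)]
    exact this
  intro y hy
  have := hF (left_mem_Icc.2 (le_of_lt hstarb)) hy hy.1
  simp only at this
  rw [hVG] at this
  linarith
end
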